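/- Along any solution (m, n, e) of the inextensible, unshearable, isotropic magnetic rod equations, the quantity I₂ = m·n + B λ e₃ (where e₃ is the third component of e) is constant in t (its derivative vanishes identically). -/

import Mathlib

open Matrix Real

/-! Differentiating `I₂`, the twist terms `(m × u)·n` and `m·(n × u)` cancel by antisymmetry of
the triple product and `(n × d₃)·n = 0`, for any `u`. What remains is
`λ m·(e × d₃) + Bλ e₃' = λ (m₁e₂ - m₂e₁) + Bλ (e₁u₂ - e₂u₁)`, which vanishes because isotropy
gives `u₁ = m₁/B` and `u₂ = m₂/B`. -/

theorem HasDerivAt.dotProduct {𝕜 ι : Type*} [NontriviallyNormedField 𝕜] [Fintype ι]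
    {f g : 𝕜 → ι → 𝕜} {f' g' : ι → 𝕜} {x : 𝕜}
    (hf : HasDerivAt f f' x) (hg : HasDerivAt g g' x) :
    HasDerivAt (fun y => f y ⬝ᵥ g y) (f' ⬝ᵥ g x + f x ⬝ᵥ g') x := by
  have hcoord (i : ι) : HasDerivAt (fun y => f y i * g y i) (f' i * g x i + f x i * g' i) x :=
    (hasDerivAt_pi.mp hf i).mul (hasDerivAt_pi.mp hg i)
  have hsum := HasDerivAt.fun_sum (u := Finset.univ) fun i _ => hcoord i
  rw [Finset.sum_add_distrib] at hsum
  exact hsum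

section CrossProduct

variable {R : Type*} [CommRing R]

theorem cross_dotProduct_add_dotProduct_cross (a b u : Fin 3 → R) :
    a ⨯₃ u ⬝ᵥ b + a ⬝ᵥ b ⨯₃ u = 0 := by
  rw [dotProduct_comm, triple_product_permutation b, ← cross_anticomm, dotProduct_neg,
    neg_add_cancel]

theorem kirchhoff_rhs_dotProduct_eq (m n u d f : Fin 3 → R) :
    (m ⨯₃ u + n ⨯₃ d) ⬝ᵥ n + m ⬝ᵥ (n ⨯₃ u + f) = m ⬝ᵥ f := by
  rw [add_dotProduct, dotProduct_add, dotProduct_comm (n ⨯₃ d), dot_self_cross]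
  linear_combination cross_dotProduct_add_dotProduct_cross m n u

end CrossProduct

theorem dotProduct_cross_e3_add_mul_cross_apply_two {K : Type*} [Field K] {B : K} (hB : B ≠ 0)
    (C : K) (m e : Fin 3 → K) :
    m ⬝ᵥ e ⨯₃ ![0, 0, 1] + B * (e ⨯₃ ![m 0 / B, m 1 / B, m 2 / C]) 2 = 0 := by
  simp only [dotProduct, Fin.sum_univ_three, cross_apply, cons_val, cons_val_zero, cons_val_one]
  field_simp
  ring

theorem I2_conserved_kirchhoff_magnetic_general
    (B C lam : ℝ) (hB : 0 < B)
    (m n e : ℝ → Fin 3 → ℝ)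
    (hm : Differentiable ℝ m) (hn : Differentiable ℝ n) (he : Differentiable ℝ e)
    (u : ℝ → Fin 3 → ℝ) (hu : ∀ t, u t = ![m t 0 / B, m t 1 / B, m t 2 / C])
    (d₃ : Fin 3 → ℝ) (hd₃ : d₃ = ![0, 0, 1])
    (heqm : ∀ t, deriv m t = m t ⨯₃ u t + n t ⨯₃ d₃)
    (heqn : ∀ t, deriv n t = n t ⨯₃ u t + lam • (e t ⨯₃ d₃))
    (heqe : ∀ t, deriv e t = e t ⨯₃ u t) :
    ∀ t, deriv (fun t => m t ⬝ᵥ n t + B * lam * e t 2) t = 0 := by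
  intro t
  have he₂ : HasDerivAt (fun s => e s 2) (deriv e t 2) t :=
    hasDerivAt_pi.mp (he t).hasDerivAt 2
  have hI₂ := ((hm t).hasDerivAt.dotProduct (hn t).hasDerivAt).fun_add (he₂.const_mul (B * lam))
  rw [hI₂.deriv, heqm, heqn, heqe, kirchhoff_rhs_dotProduct_eq, dotProduct_smul, hu, hd₃]
  linear_combination lam * dotProduct_cross_e3_add_mul_cross_apply_two hB.ne' C (m t) (e t)

/-- Along any solution `(m, n, e)` of the inextensible, unshearable,
isotropic magnetic rod equations, the quantity `I₂ = m·n + B λ e₃` is constant in `t`: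
its derivative vanishes identically. -/
theorem I2_conserved_kirchhoff_magnetic
    (B C lam : ℝ) (hB : 0 < B) (hC : 0 < C)
    (m n e : ℝ → Fin 3 → ℝ)
    (hm : Differentiable ℝ m) (hn : Differentiable ℝ n) (he : Differentiable ℝ e)
    (u : ℝ → Fin 3 → ℝ) (hu : ∀ t, u t = ![m t 0 / B, m t 1 / B, m t 2 / C])
    (d₃ : Fin 3 → ℝ) (hd₃ : d₃ = ![0, 0, 1])
    (heqm : ∀ t, deriv m t = m t ⨯₃ u t + n t ⨯₃ d₃)
    (heqn : ∀ t, deriv n t = n t ⨯₃ u t + lam • (e t ⨯₃ d₃))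
    (heqe : ∀ t, deriv e t = e t ⨯₃ u t) :
    ∀ t, deriv (fun t => m t ⬝ᵥ n t + B * lam * e t 2) t = 0 :=
  I2_conserved_kirchhoff_magnetic_general B C lam hB m n e hm hn he u hu d₃ hd₃ heqm heqn heqe
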